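/- arXiv:2002.00879 — 4 statements merged into one kernel-verified Lean document; each statement's English description precedes it below -/
import Mathlib

section
/- Let n ≥ 1. For every n×n complex Hermitian matrix A, γ(A) ≤ γ₀(A) ≤ 2·γ(A). -/
open Matrix ComplexOrder

/-- The ℓ¹ norm of a vector in ℂⁿ. -/
noncomputable def l1n {n : ℕ} (x : Fin n → ℂ) : ℝ := ∑ i, ‖x i‖

/-- The entrywise ℓ¹ norm ‖A‖₁,₁ of a matrix. -/
noncomputable def norm11 {n : ℕ} (A : Matrix (Fin n) (Fin n) ℂ) : ℝ :=
  ∑ i, ∑ j, ‖A i j‖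

/-- The Frobenius norm of a matrix. -/
noncomputable def frobNorm {n : ℕ} (A : Matrix (Fin n) (Fin n) ℂ) : ℝ :=
  Real.sqrt (∑ i, ∑ j, ‖A i j‖ ^ 2)

/-- γ₊(A): infimum of Σ ‖g_k‖₁² over finite decompositions A = Σ g_k g_k*. -/
noncomputable def gammaPlus {n : ℕ} (A : Matrix (Fin n) (Fin n) ℂ) : ℝ :=
  sInf {r : ℝ | ∃ (m : ℕ) (g : Fin m → Fin n → ℂ),
    A = ∑ k, vecMulVec (g k) (star (g k)) ∧ r = ∑ k, (l1n (g k)) ^ 2}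

/-- γ(A): infimum of Σ ‖g_k‖₁‖h_k‖₁ over finite decompositions A = Σ g_k h_k*. -/
noncomputable def gammaCross {n : ℕ} (A : Matrix (Fin n) (Fin n) ℂ) : ℝ :=
  sInf {r : ℝ | ∃ (m : ℕ) (g h : Fin m → Fin n → ℂ),
    A = ∑ k, vecMulVec (g k) (star (h k)) ∧ r = ∑ k, l1n (g k) * l1n (h k)}

/-- γ₀(A): infimum of γ₊(B) + γ₊(C) over decompositions A = B - C with B, C PSD. -/
noncomputable def gammaZero {n : ℕ} (A : Matrix (Fin n) (Fin n) ℂ) : ℝ :=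
  sInf {r : ℝ | ∃ B C : Matrix (Fin n) (Fin n) ℂ, B.PosSemidef ∧ C.PosSemidef ∧
    A = B - C ∧ r = gammaPlus B + gammaPlus C}

/-! `γ ≤ γ₀`: Gram decompositions `B = ∑ gₖ gₖ*` and `C = ∑ hₖ hₖ*` give the decomposition
`B - C = ∑ gₖ gₖ* + ∑ hₖ (-hₖ)*`, whose cost is the sum of the two Gram costs.

`γ₀ ≤ 2γ`: given `A = ∑ gₖ hₖ*`, rescale each pair so that
`‖gₖ‖₁ = ‖hₖ‖₁ = √(‖gₖ‖₁‖hₖ‖₁)`. As `A` is Hermitian, `A = (A + A*) / 2 = ∑ (pₖ pₖ* - qₖ qₖ*)`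
with `pₖ = (gₖ + hₖ) / 2` and `qₖ = (gₖ - hₖ) / 2`, and the triangle inequality gives
`‖pₖ‖₁², ‖qₖ‖₁² ≤ ‖gₖ‖₁‖hₖ‖₁`. -/

section l1n

variable {n : ℕ}

lemma l1n_eq_norm (x : Fin n → ℂ) : l1n x = ‖WithLp.toLp 1 x‖ := by
  simp [l1n, PiLp.norm_eq_of_L1]

lemma l1n_nonneg (x : Fin n → ℂ) : 0 ≤ l1n x := by
  simp [l1n_eq_norm]

lemma l1n_pos {x : Fin n → ℂ} (hx : x ≠ 0) : 0 < l1n x := by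
  simpa [l1n_eq_norm] using hx

lemma l1n_zero : l1n (0 : Fin n → ℂ) = 0 := by
  simp [l1n_eq_norm]

lemma l1n_neg (x : Fin n → ℂ) : l1n (-x) = l1n x := by
  simp only [l1n_eq_norm, WithLp.toLp_neg, norm_neg]

lemma l1n_smul (c : ℂ) (x : Fin n → ℂ) : l1n (c • x) = ‖c‖ * l1n x := by
  simp only [l1n_eq_norm, WithLp.toLp_smul, norm_smul]

lemma l1n_add_le (x y : Fin n → ℂ) : l1n (x + y) ≤ l1n x + l1n y := by
  simpa only [l1n_eq_norm, WithLp.toLp_add] using norm_add_le _ _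

lemma l1n_sub_le (x y : Fin n → ℂ) : l1n (x - y) ≤ l1n x + l1n y := by
  simpa only [l1n_eq_norm, WithLp.toLp_sub] using norm_sub_le _ _

end l1n

lemma Real.sqrt_div_mul_eq_sqrt_mul {a b : ℝ} (ha : 0 < a) (hb : 0 ≤ b) :
    √(b / a) * a = √(a * b) := by
  rw [eq_comm, Real.sqrt_eq_iff_mul_self_eq (by positivity) (by positivity), mul_mul_mul_comm,
    Real.mul_self_sqrt (by positivity)]
  field_simp

section decompositions

variable {n m : ℕ}

lemma exists_vecMulVec_eq_l1n_eq_sqrt (g h : Fin n → ℂ) :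
    ∃ g' h' : Fin n → ℂ, vecMulVec g' (star h') = vecMulVec g (star h) ∧
      l1n g' = √(l1n g * l1n h) ∧ l1n h' = √(l1n g * l1n h) := by
  by_cases hgh : g = 0 ∨ h = 0
  · refine ⟨0, 0, ?_, ?_⟩
    · rcases hgh with rfl | rfl <;> simp
    · rcases hgh with rfl | rfl <;> simp [l1n_zero]
  push Not at hgh
  have hg := l1n_pos hgh.1
  have hh := l1n_pos hgh.2
  set c := √(l1n h / l1n g)
  have hc : 0 < c := Real.sqrt_pos.mpr (div_pos hh hg)
  refine ⟨(c : ℂ) • g, ((c⁻¹ : ℝ) : ℂ) • h, ?_, ?_, ?_⟩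
  · rw [star_smul, Complex.star_def, Complex.conj_ofReal, vecMulVec_smul, smul_vecMulVec,
      smul_smul, ← Complex.ofReal_mul, inv_mul_cancel₀ hc.ne', Complex.ofReal_one, one_smul]
  · rw [l1n_smul, Complex.norm_real, Real.norm_of_nonneg hc.le,
      Real.sqrt_div_mul_eq_sqrt_mul hg hh.le]
  · rw [l1n_smul, Complex.norm_real, Real.norm_of_nonneg (inv_nonneg.mpr hc.le), ← Real.sqrt_inv,
      inv_div, Real.sqrt_div_mul_eq_sqrt_mul hh hg.le, mul_comm]

lemma exists_half_add_vecMulVec_eq_sub (g h : Fin n → ℂ) :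
    ∃ p q : Fin n → ℂ,
      (1 / 2 : ℂ) • (vecMulVec g (star h) + vecMulVec h (star g)) =
        vecMulVec p (star p) - vecMulVec q (star q) ∧
      l1n p ^ 2 + l1n q ^ 2 ≤ 2 * (l1n g * l1n h) := by
  obtain ⟨g', h', hgh, hg', hh'⟩ := exists_vecMulVec_eq_l1n_eq_sqrt g h
  have hhg : vecMulVec h' (star g') = vecMulVec h (star g) := by
    simpa only [conjTranspose_vecMulVec, star_star] using congrArg conjTranspose hgh
  refine ⟨(1 / 2 : ℂ) • (g' + h'), (1 / 2 : ℂ) • (g' - h'), ?_, ?_⟩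
  · rw [← hgh, ← hhg]
    ext i j
    simp only [Matrix.smul_apply, Matrix.add_apply, Matrix.sub_apply, vecMulVec_apply,
      Pi.smul_apply, Pi.add_apply, Pi.sub_apply, Pi.star_apply, smul_eq_mul, star_mul', star_add,
      star_sub]
    norm_num
    ring
  · have hp : l1n ((1 / 2 : ℂ) • (g' + h')) ≤ √(l1n g * l1n h) := by
      rw [l1n_smul]
      norm_num
      linarith [l1n_add_le g' h']
    have hq : l1n ((1 / 2 : ℂ) • (g' - h')) ≤ √(l1n g * l1n h) := by
      rw [l1n_smul]
      norm_num
      linarith [l1n_sub_le g' h']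
    have hsq := Real.sq_sqrt (mul_nonneg (l1n_nonneg g) (l1n_nonneg h))
    nlinarith [l1n_nonneg ((1 / 2 : ℂ) • (g' + h')), l1n_nonneg ((1 / 2 : ℂ) • (g' - h'))]


lemma Matrix.IsHermitian.exists_eq_sum_sub_sum {A : Matrix (Fin n) (Fin n) ℂ}
    (hA : A.IsHermitian) {g h : Fin m → Fin n → ℂ} (hdec : A = ∑ k, vecMulVec (g k) (star (h k))) :
    ∃ p q : Fin m → Fin n → ℂ,
      A = ∑ k, vecMulVec (p k) (star (p k)) - ∑ k, vecMulVec (q k) (star (q k)) ∧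
      ∑ k, l1n (p k) ^ 2 + ∑ k, l1n (q k) ^ 2 ≤ 2 * ∑ k, l1n (g k) * l1n (h k) := by
  choose p q hpq hle using fun k => exists_half_add_vecMulVec_eq_sub (g k) (h k)
  refine ⟨p, q, ?_, ?_⟩
  · calc A = (1 / 2 : ℂ) • (A + Aᴴ) := by
          rw [hA.eq, ← two_smul ℂ A, smul_smul]
          norm_num
      _ = ∑ k, (1 / 2 : ℂ) • (vecMulVec (g k) (star (h k)) + vecMulVec (h k) (star (g k))) := by
          conv_lhs => rw [hdec]
          simp only [conjTranspose_sum, conjTranspose_vecMulVec, star_star, ← Finset.smul_sum,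
            Finset.sum_add_distrib]
      _ = _ := by rw [← Finset.sum_sub_distrib, Finset.sum_congr rfl fun k _ => hpq k]
  · rw [← Finset.sum_add_distrib, Finset.mul_sum]
    exact Finset.sum_le_sum fun k _ => hle k

lemma exists_eq_sum_vecMulVec (A : Matrix (Fin n) (Fin n) ℂ) :
    ∃ (m : ℕ) (g h : Fin m → Fin n → ℂ), A = ∑ k, vecMulVec (g k) (star (h k)) := by
  refine ⟨n, fun k => Pi.single k 1, fun k => star (A k), ?_⟩
  ext i j
  simp [Matrix.sum_apply, vecMulVec_apply, Pi.single_apply]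

end decompositions

section gamma

variable {n m : ℕ}

lemma gammaPlus_le {B : Matrix (Fin n) (Fin n) ℂ} {g : Fin m → Fin n → ℂ}
    (hB : B = ∑ k, vecMulVec (g k) (star (g k))) : gammaPlus B ≤ ∑ k, l1n (g k) ^ 2 := by
  refine csInf_le ⟨0, ?_⟩ ⟨m, g, hB, rfl⟩
  rintro r ⟨m, g, -, rfl⟩
  positivity

lemma gammaCross_le {A : Matrix (Fin n) (Fin n) ℂ} {g h : Fin m → Fin n → ℂ}
    (hA : A = ∑ k, vecMulVec (g k) (star (h k))) :
    gammaCross A ≤ ∑ k, l1n (g k) * l1n (h k) := by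
  refine csInf_le ⟨0, ?_⟩ ⟨m, g, h, hA, rfl⟩
  rintro r ⟨m, g, h, -, rfl⟩
  exact Finset.sum_nonneg fun k _ => mul_nonneg (l1n_nonneg _) (l1n_nonneg _)

lemma gammaPlus_nonneg (B : Matrix (Fin n) (Fin n) ℂ) : 0 ≤ gammaPlus B := by
  refine Real.sInf_nonneg ?_
  rintro r ⟨m, g, -, rfl⟩
  positivity

lemma gammaZero_le {A B C : Matrix (Fin n) (Fin n) ℂ} (hB : B.PosSemidef) (hC : C.PosSemidef)
    (hA : A = B - C) : gammaZero A ≤ gammaPlus B + gammaPlus C := by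
  refine csInf_le ⟨0, ?_⟩ ⟨B, C, hB, hC, hA, rfl⟩
  rintro r ⟨B, C, -, -, -, rfl⟩
  exact add_nonneg (gammaPlus_nonneg B) (gammaPlus_nonneg C)

lemma Matrix.PosSemidef.exists_lt_gammaPlus_add {B : Matrix (Fin n) (Fin n) ℂ}
    (hB : B.PosSemidef) {ε : ℝ} (hε : 0 < ε) :
    ∃ (m : ℕ) (g : Fin m → Fin n → ℂ), B = ∑ k, vecMulVec (g k) (star (g k)) ∧
      ∑ k, l1n (g k) ^ 2 < gammaPlus B + ε := by
  obtain ⟨m, g, hg⟩ := posSemidef_iff_eq_sum_vecMulVec.mp hB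
  obtain ⟨_, ⟨m, g, hg, rfl⟩, hlt⟩ :=
    exists_lt_of_csInf_lt (by exact ⟨_, m, g, hg, rfl⟩) (lt_add_of_pos_right (gammaPlus B) hε)
  exact ⟨m, g, hg, hlt⟩

theorem gammaCross_le_gammaPlus_add_gammaPlus {A B C : Matrix (Fin n) (Fin n) ℂ}
    (hB : B.PosSemidef) (hC : C.PosSemidef) (hA : A = B - C) :
    gammaCross A ≤ gammaPlus B + gammaPlus C := by
  refine le_of_forall_pos_le_add fun ε hε => ?_
  obtain ⟨m₁, g, hg, hgε⟩ := hB.exists_lt_gammaPlus_add (half_pos hε)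
  obtain ⟨m₂, h, hh, hhε⟩ := hC.exists_lt_gammaPlus_add (half_pos hε)
  have hdec : A = ∑ k, vecMulVec (Fin.append g h k) (star (Fin.append g (-h) k)) := by
    rw [Fin.sum_univ_add, hA, hg, hh, sub_eq_add_neg, ← Finset.sum_neg_distrib]
    simp [Fin.append_left, Fin.append_right]
  calc gammaCross A ≤ ∑ k, l1n (Fin.append g h k) * l1n (Fin.append g (-h) k) := gammaCross_le hdec
    _ = ∑ k, l1n (g k) ^ 2 + ∑ k, l1n (h k) ^ 2 := by
      simp [Fin.sum_univ_add, Fin.append_left, Fin.append_right, l1n_neg, sq]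
    _ ≤ gammaPlus B + gammaPlus C + ε := by linarith

theorem Matrix.IsHermitian.gammaZero_le_two_mul {A : Matrix (Fin n) (Fin n) ℂ} (hA : A.IsHermitian)
    {g h : Fin m → Fin n → ℂ} (hdec : A = ∑ k, vecMulVec (g k) (star (h k))) :
    gammaZero A ≤ 2 * ∑ k, l1n (g k) * l1n (h k) := by
  obtain ⟨p, q, hpq, hle⟩ := hA.exists_eq_sum_sub_sum hdec
  calc gammaZero A
      ≤ gammaPlus (∑ k, vecMulVec (p k) (star (p k))) +
          gammaPlus (∑ k, vecMulVec (q k) (star (q k))) :=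
        gammaZero_le (posSemidef_iff_eq_sum_vecMulVec.mpr ⟨m, p, rfl⟩)
          (posSemidef_iff_eq_sum_vecMulVec.mpr ⟨m, q, rfl⟩) hpq
    _ ≤ ∑ k, l1n (p k) ^ 2 + ∑ k, l1n (q k) ^ 2 := add_le_add (gammaPlus_le rfl) (gammaPlus_le rfl)
    _ ≤ 2 * ∑ k, l1n (g k) * l1n (h k) := hle

end gamma

theorem stmt3_general (n : ℕ) (A : Matrix (Fin n) (Fin n) ℂ) (hA : A.IsHermitian) :
    gammaCross A ≤ gammaZero A ∧ gammaZero A ≤ 2 * gammaCross A := by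
  obtain ⟨m, g, h, hdec⟩ := exists_eq_sum_vecMulVec A
  constructor
  · obtain ⟨p, q, hpq, -⟩ := hA.exists_eq_sum_sub_sum hdec
    refine le_csInf ⟨_, _, _, posSemidef_iff_eq_sum_vecMulVec.mpr ⟨m, p, rfl⟩,
      posSemidef_iff_eq_sum_vecMulVec.mpr ⟨m, q, rfl⟩, hpq, rfl⟩ ?_
    rintro r ⟨B, C, hB, hC, hBC, rfl⟩
    exact gammaCross_le_gammaPlus_add_gammaPlus hB hC hBC
  · suffices gammaZero A / 2 ≤ gammaCross A by linarith
    refine le_csInf ⟨_, m, g, h, hdec, rfl⟩ ?_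
    rintro r ⟨m', g', h', hdec', rfl⟩
    linarith [hA.gammaZero_le_two_mul hdec']

theorem stmt3 (n : ℕ) (hn : 1 ≤ n) (A : Matrix (Fin n) (Fin n) ℂ) (hA : A.IsHermitian) :
    gammaCross A ≤ gammaZero A ∧ gammaZero A ≤ 2 * gammaCross A :=
  stmt3_general n A hA
end

section
/- Let n ≥ 1, let A be an n×n complex positive semidefinite Hermitian matrix, and let y ∈ ℂⁿ. Then A − y y* is positive semidefinite if and only if there exists x ∈ ℂⁿ such that y = A x and x* A x ≤ 1. Moreover, if y = A x with x* A x = 1, then rank(A − y y*) < rank(A). -/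
/-!
If `y = A x` with `t = x* A x ≤ 1`, then
`A - y y* = (1 - x x* A)* A (1 - x x* A) + (1 - t) y y*`, a sum of positive semidefinite matrices.
Conversely, testing `A - y y* ≥ 0` against `z ∈ ker A` gives `-|z* y|² ≥ 0`, so `y ⊥ ker A`, which is
the range of the Hermitian `A`; writing `y = A x` and testing against `x` gives `t - t² ≥ 0`, so
`t ≤ 1`. When `t = 1`, the vector `x` lies in `ker (A - y y*)` but not in `ker A ⊆ ker (A - y y*)`,
so the rank drops.
-/

open Matrix ComplexOrder

namespace Matrix

section CommRing

variable {ι R : Type*} [Fintype ι] [CommRing R]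

lemma sub_vecMulVec_mulVec {m : Type*} (A : Matrix m ι R) (u : m → R) (v z : ι → R) :
    (A - vecMulVec u v) *ᵥ z = A *ᵥ z - (v ⬝ᵥ z) • u := by
  rw [sub_mulVec, vecMulVec_mulVec, op_smul_eq_smul]

lemma vecMulVec_mul_mul_vecMulVec {l n : Type*} (u : l → R) (v w : ι → R) (z : n → R)
    (A : Matrix ι ι R) : vecMulVec u v * A * vecMulVec w z = (v ⬝ᵥ A *ᵥ w) • vecMulVec u z := by
  rw [vecMulVec_mul, vecMulVec_mul_vecMulVec, vecMulVec_smul, ← dotProduct_mulVec]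

variable [StarRing R]

lemma IsHermitian.star_mulVec_dotProduct {A : Matrix ι ι R} (hA : A.IsHermitian) (x z : ι → R) :
    star (A *ᵥ x) ⬝ᵥ z = star x ⬝ᵥ A *ᵥ z := by
  rw [star_mulVec, hA.eq, ← dotProduct_mulVec]

lemma IsHermitian.vecMulVec_mulVec_star {A : Matrix ι ι R} (hA : A.IsHermitian) (x : ι → R) :
    vecMulVec (A *ᵥ x) (star (A *ᵥ x)) = A * vecMulVec x (star x) * A := by
  rw [mul_vecMulVec, vecMulVec_mul, star_mulVec, hA.eq]

variable [DecidableEq ι]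

lemma IsHermitian.sub_vecMulVec_mulVec_eq {A : Matrix ι ι R} (hA : A.IsHermitian) (x : ι → R) :
    A - vecMulVec (A *ᵥ x) (star (A *ᵥ x)) =
      (1 - vecMulVec x (star x) * A)ᴴ * A * (1 - vecMulVec x (star x) * A) +
        (1 - star x ⬝ᵥ A *ᵥ x) • vecMulVec (A *ᵥ x) (star (A *ᵥ x)) := by
  have hP : (vecMulVec x (star x))ᴴ = vecMulVec x (star x) := by
    rw [conjTranspose_vecMulVec, star_star]
  rw [conjTranspose_sub, conjTranspose_one, conjTranspose_mul, hP, hA.eq,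
    hA.vecMulVec_mulVec_star]
  have hPAP : A * (vecMulVec x (star x) * A * vecMulVec x (star x)) * A =
      (star x ⬝ᵥ A *ᵥ x) • (A * vecMulVec x (star x) * A) := by
    rw [vecMulVec_mul_mul_vecMulVec, Matrix.mul_smul, Matrix.smul_mul]
  simp only [sub_mul, mul_sub, Matrix.one_mul, Matrix.mul_one, sub_smul, one_smul, ← hPAP]
  noncomm_ring

end CommRing

section RCLike

variable {ι 𝕜 : Type*} [Fintype ι] [RCLike 𝕜]

lemma exists_mulVec_eq_of_forall_dotProduct_eq_zero {κ : Type*} [Fintype κ] {A : Matrix ι κ 𝕜}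
    {y : ι → 𝕜} (h : ∀ z, Aᴴ *ᵥ z = 0 → star z ⬝ᵥ y = 0) : ∃ x, A *ᵥ x = y := by
  classical
  have hy : WithLp.toLp 2 y ∈ (LinearMap.ker (toEuclideanLin Aᴴ))ᗮ := by
    rw [Submodule.mem_orthogonal]
    intro z hz
    have hzy := h z.ofLp (by simpa using congrArg WithLp.ofLp (LinearMap.mem_ker.mp hz))
    simpa [EuclideanSpace.inner_eq_star_dotProduct, dotProduct_comm] using hzy
  rw [LinearMap.orthogonal_ker, ← toEuclideanLin_conjTranspose_eq_adjoint,
    conjTranspose_conjTranspose] at hy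
  obtain ⟨x, hx⟩ := hy
  exact ⟨x.ofLp, by simpa using congrArg WithLp.ofLp hx⟩

lemma eq_zero_of_nonneg_neg_star_mul_self {w : 𝕜} (h : 0 ≤ -(star w * w)) : w = 0 := by
  have hw : star w * w = 0 := le_antisymm (neg_nonneg.mp h) (star_mul_self_nonneg w)
  simpa using hw

lemma le_one_of_nonneg_of_nonneg_sub_mul_self {t : 𝕜} (ht : 0 ≤ t) (h : 0 ≤ t - t * t) : t ≤ 1 := by
  obtain ⟨r, hr, rfl⟩ := RCLike.nonneg_iff_exists_ofReal.mp ht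
  rw [← RCLike.ofReal_mul, ← RCLike.ofReal_sub, RCLike.ofReal_nonneg] at h
  rw [← RCLike.ofReal_one, RCLike.ofReal_le_ofReal]
  nlinarith

variable {A : Matrix ι ι 𝕜}

lemma star_dotProduct_eq_zero_of_posSemidef_sub_vecMulVec {y z : ι → 𝕜}
    (h : (A - vecMulVec y (star y)).PosSemidef) (hz : A *ᵥ z = 0) : star z ⬝ᵥ y = 0 := by
  apply eq_zero_of_nonneg_neg_star_mul_self
  have hzz := h.dotProduct_mulVec_nonneg z
  rwa [sub_vecMulVec_mulVec, hz, zero_sub, dotProduct_neg, dotProduct_smul, smul_eq_mul,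
    star_dotProduct] at hzz

lemma dotProduct_mulVec_le_one_of_posSemidef_sub_vecMulVec (hA : A.PosSemidef) {x : ι → 𝕜}
    (h : (A - vecMulVec (A *ᵥ x) (star (A *ᵥ x))).PosSemidef) : star x ⬝ᵥ A *ᵥ x ≤ 1 := by
  have hxx := h.dotProduct_mulVec_nonneg x
  rw [sub_vecMulVec_mulVec, dotProduct_sub, dotProduct_smul, smul_eq_mul,
    hA.isHermitian.star_mulVec_dotProduct] at hxx
  exact le_one_of_nonneg_of_nonneg_sub_mul_self (hA.dotProduct_mulVec_nonneg x) hxx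

lemma PosSemidef.sub_vecMulVec_of_dotProduct_mulVec_le_one (hA : A.PosSemidef) {x : ι → 𝕜}
    (hx : star x ⬝ᵥ A *ᵥ x ≤ 1) : (A - vecMulVec (A *ᵥ x) (star (A *ᵥ x))).PosSemidef := by
  classical
  rw [hA.isHermitian.sub_vecMulVec_mulVec_eq]
  exact (hA.conjTranspose_mul_mul_same _).add
    ((posSemidef_vecMulVec_self_star _).smul (sub_nonneg.mpr hx))

lemma posSemidef_sub_vecMulVec_iff (hA : A.PosSemidef) (y : ι → 𝕜) :
    (A - vecMulVec y (star y)).PosSemidef ↔ ∃ x, y = A *ᵥ x ∧ star x ⬝ᵥ A *ᵥ x ≤ 1 := by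
  constructor
  · intro h
    obtain ⟨x, rfl⟩ : ∃ x, A *ᵥ x = y := exists_mulVec_eq_of_forall_dotProduct_eq_zero
      fun z hz ↦ star_dotProduct_eq_zero_of_posSemidef_sub_vecMulVec h (hA.isHermitian.eq ▸ hz)
    exact ⟨x, rfl, dotProduct_mulVec_le_one_of_posSemidef_sub_vecMulVec hA h⟩
  · rintro ⟨x, rfl, hx⟩
    exact hA.sub_vecMulVec_of_dotProduct_mulVec_le_one hx

end RCLike

section Field

variable {ι K : Type*} [Fintype ι] [Field K]

lemma rank_lt_rank_of_ker_mulVecLin_lt {m : Type*} [Fintype m] {A B : Matrix m ι K}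
    (h : LinearMap.ker A.mulVecLin < LinearMap.ker B.mulVecLin) : B.rank < A.rank := by
  have hA := LinearMap.finrank_range_add_finrank_ker A.mulVecLin
  have hB := LinearMap.finrank_range_add_finrank_ker B.mulVecLin
  have hker := Submodule.finrank_lt_finrank_of_lt h
  unfold rank
  omega

variable [StarRing K]

lemma IsHermitian.ker_mulVecLin_lt_ker_sub_vecMulVec {A : Matrix ι ι K} (hA : A.IsHermitian)
    {x : ι → K} (hx : star x ⬝ᵥ A *ᵥ x = 1) :
    LinearMap.ker A.mulVecLin <
      LinearMap.ker (A - vecMulVec (A *ᵥ x) (star (A *ᵥ x))).mulVecLin := by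
  refine SetLike.lt_iff_le_and_exists.mpr ⟨fun z hz ↦ ?_, x, ?_, fun hAx ↦ ?_⟩
  · rw [LinearMap.mem_ker, mulVecLin_apply] at hz ⊢
    rw [sub_vecMulVec_mulVec, hA.star_mulVec_dotProduct, hz, dotProduct_zero, zero_smul, sub_zero]
  · rw [LinearMap.mem_ker, mulVecLin_apply, sub_vecMulVec_mulVec, hA.star_mulVec_dotProduct, hx,
      one_smul, sub_self]
  · rw [LinearMap.mem_ker, mulVecLin_apply] at hAx
    rw [hAx, dotProduct_zero] at hx
    exact zero_ne_one hx

lemma IsHermitian.rank_sub_vecMulVec_mulVec_lt {A : Matrix ι ι K} (hA : A.IsHermitian)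
    {x : ι → K} (hx : star x ⬝ᵥ A *ᵥ x = 1) :
    (A - vecMulVec (A *ᵥ x) (star (A *ᵥ x))).rank < A.rank :=
  rank_lt_rank_of_ker_mulVecLin_lt (hA.ker_mulVecLin_lt_ker_sub_vecMulVec hx)

end Field

end Matrix

theorem stmt9_general (n : ℕ) (A : Matrix (Fin n) (Fin n) ℂ) (hA : A.PosSemidef)
    (y : Fin n → ℂ) :
    ((A - vecMulVec y (star y)).PosSemidef ↔
      ∃ x : Fin n → ℂ, y = A.mulVec x ∧ star x ⬝ᵥ A.mulVec x ≤ 1) ∧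
    (∀ x : Fin n → ℂ, y = A.mulVec x → star x ⬝ᵥ A.mulVec x = 1 →
      (A - vecMulVec y (star y)).rank < A.rank) := by
  refine ⟨posSemidef_sub_vecMulVec_iff hA y, ?_⟩
  rintro x rfl hx
  exact hA.isHermitian.rank_sub_vecMulVec_mulVec_lt hx

theorem stmt9 (n : ℕ) (hn : 1 ≤ n) (A : Matrix (Fin n) (Fin n) ℂ) (hA : A.PosSemidef)
    (y : Fin n → ℂ) :
    ((A - vecMulVec y (star y)).PosSemidef ↔
      ∃ x : Fin n → ℂ, y = A.mulVec x ∧ star x ⬝ᵥ A.mulVec x ≤ 1) ∧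
    (∀ x : Fin n → ℂ, y = A.mulVec x → star x ⬝ᵥ A.mulVec x = 1 →
      (A - vecMulVec y (star y)).rank < A.rank) :=
  stmt9_general n A hA y
end

section
/- Let n ≥ 1 and suppose the n×n complex positive semidefinite Hermitian matrix A admits a decomposition A = Σ_{1 ≤ i < j ≤ n} u_{ij} u_{ij}* + Σ_{i=1}^n v_i v_i*, where each vector u_{ij} ∈ ℂⁿ has nonzero entries at most in positions i and j, and each vector v_i ∈ ℂⁿ has nonzero entries at most in position i. Then γ₊(A) = ‖A‖₁,₁. -/
open Matrix ComplexOrder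

/-!
For any decomposition `A = ∑ gₖ gₖ*`, the triangle inequality applied entrywise gives
`‖A‖₁,₁ ≤ ∑ ‖gₖ gₖ*‖₁,₁ = ∑ ‖gₖ‖₁²`, so `‖A‖₁,₁ ≤ γ₊(A)`. For the given decomposition the
triangle inequality is an equality in every entry: on the diagonal all summands
`gₖ(p) conj (gₖ(p))` are nonnegative reals, and an off-diagonal entry `(p, q)` receives a
contribution only from `u_{min(p,q), max(p,q)}`. So this decomposition attains `γ₊(A)`.
-/

section Norm11

variable {n : ℕ} {ι : Type*}

lemma norm11_vecMulVec_star (g : Fin n → ℂ) :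
    norm11 (vecMulVec g (star g)) = l1n g ^ 2 := by
  simp only [norm11, vecMulVec_apply, Pi.star_apply, l1n, sq, Finset.sum_mul_sum]
  simp

lemma sum_norm11_eq (s : Finset ι) (M : ι → Matrix (Fin n) (Fin n) ℂ) :
    ∑ k ∈ s, norm11 (M k) = ∑ i, ∑ j, ∑ k ∈ s, ‖M k i j‖ := by
  simp only [norm11]
  rw [Finset.sum_comm]
  exact Finset.sum_congr rfl fun i _ => Finset.sum_comm

lemma norm11_sum_le (s : Finset ι) (M : ι → Matrix (Fin n) (Fin n) ℂ) :
    norm11 (∑ k ∈ s, M k) ≤ ∑ k ∈ s, norm11 (M k) := by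
  rw [sum_norm11_eq, norm11]
  gcongr with i _ j _
  rw [Matrix.sum_apply]
  exact norm_sum_le _ _

lemma norm11_sum_of_norm_sum_eq (s : Finset ι) (M : ι → Matrix (Fin n) (Fin n) ℂ)
    (h : ∀ i j, ‖∑ k ∈ s, M k i j‖ = ∑ k ∈ s, ‖M k i j‖) :
    norm11 (∑ k ∈ s, M k) = ∑ k ∈ s, norm11 (M k) := by
  rw [sum_norm11_eq, norm11]
  simp only [Matrix.sum_apply, h]

lemma norm11_le_sum_l1n_sq {A : Matrix (Fin n) (Fin n) ℂ} (s : Finset ι)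
    (g : ι → Fin n → ℂ) (hA : A = ∑ k ∈ s, vecMulVec (g k) (star (g k))) :
    norm11 A ≤ ∑ k ∈ s, l1n (g k) ^ 2 := by
  simpa only [hA, norm11_vecMulVec_star] using
    norm11_sum_le s fun k => vecMulVec (g k) (star (g k))

end Norm11

section GammaPlus

variable {n : ℕ} {ι : Type*}

lemma exists_fin_decomp_of_eq_sum {A : Matrix (Fin n) (Fin n) ℂ} (s : Finset ι)
    (g : ι → Fin n → ℂ) (hA : A = ∑ k ∈ s, vecMulVec (g k) (star (g k))) :
    ∃ (m : ℕ) (g' : Fin m → Fin n → ℂ), A = ∑ k, vecMulVec (g' k) (star (g' k)) ∧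
      ∑ k ∈ s, l1n (g k) ^ 2 = ∑ k, l1n (g' k) ^ 2 := by
  refine ⟨s.card, fun k => g (s.equivFin.symm k), ?_⟩
  have reindex : ∀ f : (Fin n → ℂ) → Matrix (Fin n) (Fin n) ℂ × ℝ,
      ∑ k ∈ s, f (g k) = ∑ k : Fin s.card, f (g (s.equivFin.symm k)) := fun f => by
    rw [Equiv.sum_comp s.equivFin.symm (fun k => f (g k))]
    exact (Finset.sum_coe_sort s fun k => f (g k)).symm
  simpa only [Prod.ext_iff, Prod.fst_sum, Prod.snd_sum, hA] using
    reindex fun x => (vecMulVec x (star x), l1n x ^ 2)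

lemma gammaPlus_le_sum_l1n_sq {A : Matrix (Fin n) (Fin n) ℂ} (s : Finset ι)
    (g : ι → Fin n → ℂ) (hA : A = ∑ k ∈ s, vecMulVec (g k) (star (g k))) :
    gammaPlus A ≤ ∑ k ∈ s, l1n (g k) ^ 2 := by
  refine csInf_le ⟨0, ?_⟩ (exists_fin_decomp_of_eq_sum s g hA)
  rintro r ⟨m, g, -, rfl⟩
  positivity

lemma norm11_le_gammaPlus {A : Matrix (Fin n) (Fin n) ℂ} (s : Finset ι)
    (g : ι → Fin n → ℂ) (hA : A = ∑ k ∈ s, vecMulVec (g k) (star (g k))) :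
    norm11 A ≤ gammaPlus A := by
  refine le_csInf ⟨_, exists_fin_decomp_of_eq_sum s g hA⟩ ?_
  rintro r ⟨m, g', hg', rfl⟩
  exact norm11_le_sum_l1n_sq Finset.univ g' hg'

lemma gammaPlus_eq_norm11_of_eq_sum {A : Matrix (Fin n) (Fin n) ℂ} (s : Finset ι)
    (g : ι → Fin n → ℂ) (hA : A = ∑ k ∈ s, vecMulVec (g k) (star (g k)))
    (hnorm : norm11 A = ∑ k ∈ s, l1n (g k) ^ 2) :
    gammaPlus A = norm11 A :=
  (hnorm ▸ gammaPlus_le_sum_l1n_sq s g hA).antisymm (norm11_le_gammaPlus s g hA)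

end GammaPlus

section RankOne

variable {n : ℕ} {ι : Type*}

lemma norm_sum_mul_star_self (s : Finset ι) (z : ι → ℂ) :
    ‖∑ k ∈ s, z k * star (z k)‖ = ∑ k ∈ s, ‖z k * star (z k)‖ := by
  simp only [Complex.star_def, Complex.mul_conj', norm_pow, Complex.norm_real, norm_norm]
  norm_cast
  exact Real.norm_of_nonneg (by positivity)

lemma norm_sum_eq_sum_norm_of_eq_single (s : Finset ι) (z : ι → ℂ) (k₀ : ι)
    (h : ∀ k ∈ s, k ≠ k₀ → z k = 0) :
    ‖∑ k ∈ s, z k‖ = ∑ k ∈ s, ‖z k‖ := by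
  by_cases hk₀ : k₀ ∈ s
  · rw [Finset.sum_eq_single_of_mem k₀ hk₀ h,
      Finset.sum_eq_single_of_mem k₀ hk₀ fun k hk hne => by rw [h k hk hne, norm_zero]]
  · rw [Finset.sum_eq_zero fun k hk => h k hk (ne_of_mem_of_not_mem hk hk₀),
      Finset.sum_eq_zero fun k hk => by rw [h k hk (ne_of_mem_of_not_mem hk hk₀), norm_zero],
      norm_zero]

lemma norm11_sum_vecMulVec_star (s : Finset ι) (g : ι → Fin n → ℂ)
    (h : ∀ p q, p ≠ q → ∃ k₀, ∀ k ∈ s, k ≠ k₀ → g k p = 0 ∨ g k q = 0) :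
    norm11 (∑ k ∈ s, vecMulVec (g k) (star (g k))) = ∑ k ∈ s, l1n (g k) ^ 2 := by
  simp only [← norm11_vecMulVec_star]
  refine norm11_sum_of_norm_sum_eq s _ fun p q => ?_
  simp only [vecMulVec_apply, Pi.star_apply]
  rcases eq_or_ne p q with rfl | hpq
  · exact norm_sum_mul_star_self s fun k => g k p
  · obtain ⟨k₀, hk₀⟩ := h p q hpq
    refine norm_sum_eq_sum_norm_of_eq_single s _ k₀ fun k hk hne => ?_
    rcases hk₀ k hk hne with h0 | h0 <;> simp [h0]

end RankOne

section Support

variable {α M : Type*} [Zero M] {p q : α}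

lemma eq_zero_or_eq_zero_of_support_subset_singleton {v : α → M} {i : α}
    (hv : ∀ k, k ≠ i → v k = 0) (hpq : p ≠ q) : v p = 0 ∨ v q = 0 := by
  by_contra! ⟨hp, hq⟩
  have hpi : p = i := by_contra fun h => hp (hv p h)
  have hqi : q = i := by_contra fun h => hq (hv q h)
  exact hpq (hpi.trans hqi.symm)

lemma eq_zero_or_eq_zero_of_support_subset_pair [LinearOrder α] {u : α → M} {i j : α}
    (hij : i < j) (hu : ∀ k, k ≠ i → k ≠ j → u k = 0) (hpq : p ≠ q)
    (hne : (i, j) ≠ (min p q, max p q)) : u p = 0 ∨ u q = 0 := by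
  by_contra! ⟨hp, hq⟩
  have hp' : p = i ∨ p = j := by by_contra! h; exact hp (hu p h.1 h.2)
  have hq' : q = i ∨ q = j := by by_contra! h; exact hq (hu q h.1 h.2)
  rcases hp' with rfl | rfl <;> rcases hq' with rfl | rfl <;> simp_all [hij.le]

end Support

theorem stmt17_general (n : ℕ) (A : Matrix (Fin n) (Fin n) ℂ)
    (u : Fin n → Fin n → Fin n → ℂ) (v : Fin n → Fin n → ℂ)
    (hu : ∀ i j k, i < j → k ≠ i → k ≠ j → u i j k = 0)
    (hv : ∀ i k, k ≠ i → v i k = 0)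
    (hdecomp : A =
      (∑ i, ∑ j ∈ Finset.univ.filter (fun j => i < j),
        vecMulVec (u i j) (star (u i j))) +
      ∑ i, vecMulVec (v i) (star (v i))) :
    gammaPlus A = norm11 A := by
  let s := (Finset.univ.filter fun p : Fin n × Fin n => p.1 < p.2).disjSum
    (Finset.univ : Finset (Fin n))
  let g : (Fin n × Fin n) ⊕ Fin n → Fin n → ℂ := Sum.elim (fun p => u p.1 p.2) v
  have hA : A = ∑ k ∈ s, vecMulVec (g k) (star (g k)) := by
    rw [hdecomp, Finset.sum_disjSum, Finset.sum_filter, Fintype.sum_prod_type]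
    simp only [Finset.sum_filter, g, Sum.elim_inl, Sum.elim_inr]
  have hsupp : ∀ p q, p ≠ q → ∃ k₀, ∀ k ∈ s, k ≠ k₀ → g k p = 0 ∨ g k q = 0 := by
    refine fun p q hpq => ⟨.inl (min p q, max p q), ?_⟩
    rintro (⟨i, j⟩ | i) hk hne
    · have hij : i < j := by simpa [s] using hk
      exact eq_zero_or_eq_zero_of_support_subset_pair hij (hu i j · hij) hpq
        fun h => hne (congrArg Sum.inl h)
    · exact eq_zero_or_eq_zero_of_support_subset_singleton (hv i) hpq
  exact gammaPlus_eq_norm11_of_eq_sum s g hA (hA ▸ norm11_sum_vecMulVec_star s g hsupp)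

theorem stmt17 (n : ℕ) (hn : 1 ≤ n) (A : Matrix (Fin n) (Fin n) ℂ) (hA : A.PosSemidef)
    (u : Fin n → Fin n → Fin n → ℂ) (v : Fin n → Fin n → ℂ)
    (hu : ∀ i j k, i < j → k ≠ i → k ≠ j → u i j k = 0)
    (hv : ∀ i k, k ≠ i → v i k = 0)
    (hdecomp : A =
      (∑ i, ∑ j ∈ Finset.univ.filter (fun j => i < j),
        vecMulVec (u i j) (star (u i j))) +
      ∑ i, vecMulVec (v i) (star (v i))) :
    gammaPlus A = norm11 A :=
  stmt17_general n A u v hu hv hdecomp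
end

section
/- Let A = [[a, b, c], [conj(b), d, e], [conj(c), conj(e), f]] be a 3×3 complex positive semidefinite Hermitian matrix (so a, d, f are real and nonnegative) with a > 0 and a·d − |b|² > 0. Then γ₊(A) ≤ ‖A‖₁,₁ + 2·(|a·e − conj(b)·c| + |b|·|c| − a·|e|)/a. In particular, if |a·e − conj(b)·c| + |b|·|c| = a·|e|, then γ₊(A) = ‖A‖₁,₁. -/
open Matrix ComplexOrder

/-!
Take the Cholesky factorization `A = L Lᴴ`, `L` lower triangular with pivots `√a`,
`√(d - |b|²/a)` and `√s`, where the last Schur complement `s` is nonnegative because `A` is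
positive semidefinite. The columns `gₖ` of `L` decompose `A`, and entrywise
`|Aᵢⱼ| ≤ Σₖ |gₖᵢ| |gₖⱼ|` with equality except at `e = g₀₁ ḡ₀₂ + g₁₁ ḡ₁₂`. Hence `Σₖ ‖gₖ‖₁²`
exceeds `‖A‖₁,₁` by `2 (|g₀₁| |g₀₂| + |g₁₁| |g₁₂| - |e|) = 2 (|a e - b̄ c| + |b| |c| - a |e|) / a`.
The same entrywise inequality gives `‖A‖₁,₁ ≤ γ₊(A)`.
-/

open ComplexConjugate

section Decomposition

variable {n m : ℕ}

theorem norm11_sum_vecMulVec_le (g : Fin m → Fin n → ℂ) :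
    norm11 (∑ k, vecMulVec (g k) (star (g k))) ≤ ∑ k, l1n (g k) ^ 2 := by
  have hentry (i j : Fin n) :
      ‖(∑ k, vecMulVec (g k) (star (g k))) i j‖ ≤ ∑ k, ‖g k i‖ * ‖g k j‖ := by
    simp only [Matrix.sum_apply, vecMulVec_apply, Pi.star_apply, RCLike.star_def]
    refine (norm_sum_le _ _).trans_eq (Finset.sum_congr rfl fun k _ => ?_)
    rw [norm_mul, Complex.norm_conj]
  calc norm11 (∑ k, vecMulVec (g k) (star (g k)))
      ≤ ∑ i, ∑ j, ∑ k, ‖g k i‖ * ‖g k j‖ :=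
        Finset.sum_le_sum fun i _ => Finset.sum_le_sum fun j _ => hentry i j
    _ = ∑ i, ∑ k, ∑ j, ‖g k i‖ * ‖g k j‖ := Finset.sum_congr rfl fun _ _ => Finset.sum_comm
    _ = ∑ k, l1n (g k) ^ 2 := by rw [Finset.sum_comm]; simp only [l1n, sq, Finset.sum_mul_sum]

theorem gammaPlus_sum_vecMulVec_le (g : Fin m → Fin n → ℂ) :
    gammaPlus (∑ k, vecMulVec (g k) (star (g k))) ≤ ∑ k, l1n (g k) ^ 2 :=
  csInf_le ⟨0, by rintro r ⟨m, g', -, rfl⟩; positivity⟩ ⟨m, g, rfl, rfl⟩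

theorem norm11_le_gammaPlus_sum_vecMulVec (g : Fin m → Fin n → ℂ) :
    norm11 (∑ k, vecMulVec (g k) (star (g k))) ≤ gammaPlus (∑ k, vecMulVec (g k) (star (g k))) :=
  le_csInf ⟨_, m, g, rfl, rfl⟩ fun _ ⟨_, g', hg', hr⟩ => hr ▸ hg' ▸ norm11_sum_vecMulVec_le g'

end Decomposition

section Cholesky

def cholCol (α β γ : ℝ) (x y z : ℂ) : Fin 3 → Fin 3 → ℂ :=
  ![![α, x, y], ![0, β, z], ![0, 0, γ]]

/-- `L Lᴴ` for the lower triangular `L` whose columns are `cholCol α β γ x y z`, except that the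
last pivot `γ ^ 2` is replaced by an arbitrary real `s`, whose sign is not known a priori. -/
def cholProd (α β s : ℝ) (x y z : ℂ) : Matrix (Fin 3) (Fin 3) ℂ :=
  !![(α : ℂ) ^ 2, α * conj x, α * conj y;
     α * x, x * conj x + β ^ 2, x * conj y + β * conj z;
     α * y, y * conj x + β * z, y * conj y + z * conj z + s]

variable (α β γ : ℝ) (x y z : ℂ)

theorem sum_vecMulVec_cholCol :
    ∑ k, vecMulVec (cholCol α β γ x y z k) (star (cholCol α β γ x y z k)) =
      cholProd α β (γ ^ 2) x y z := by
  ext i j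
  simp only [Matrix.sum_apply, vecMulVec_apply, Fin.sum_univ_three, Pi.star_apply,
    RCLike.star_def]
  fin_cases i <;> fin_cases j <;> simp [cholCol, cholProd] <;> ring

theorem sum_sq_l1n_cholCol :
    ∑ k, l1n (cholCol α β γ x y z k) ^ 2 = norm11 (cholProd α β (γ ^ 2) x y z) +
      2 * (‖x‖ * ‖y‖ + |β| * ‖z‖ - ‖x * conj y + β * conj z‖) := by
  have h11 : x * conj x + (β : ℂ) ^ 2 = ((‖x‖ ^ 2 + β ^ 2 : ℝ) : ℂ) := by
    push_cast; rw [Complex.mul_conj']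
  have h22 : y * conj y + z * conj z + ((γ ^ 2 : ℝ) : ℂ) =
      ((‖y‖ ^ 2 + ‖z‖ ^ 2 + γ ^ 2 : ℝ) : ℂ) := by
    push_cast; rw [Complex.mul_conj', Complex.mul_conj']
  have h21 : ‖y * conj x + β * z‖ = ‖x * conj y + β * conj z‖ := by
    rw [← Complex.norm_conj]; simp [mul_comm]
  simp only [norm11, cholProd, cholCol, l1n, Fin.sum_univ_three, of_apply, cons_val]
  rw [h11, h22, h21]
  simp only [norm_mul, Complex.norm_conj, Complex.norm_real, Real.norm_eq_abs, norm_zero,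
    norm_pow, abs_of_nonneg (by positivity : 0 ≤ ‖x‖ ^ 2 + β ^ 2),
    abs_of_nonneg (by positivity : 0 ≤ ‖y‖ ^ 2 + ‖z‖ ^ 2 + γ ^ 2)]
  linear_combination sq_abs β + sq_abs γ

theorem nonneg_of_posSemidef_cholProd {α β s : ℝ} {x y z : ℂ}
    (h : (cholProd α β s x y z).PosSemidef) (hα : α ≠ 0) (hβ : β ≠ 0) : 0 ≤ s := by
  -- `v` is orthogonal to the first two columns of the factor, so only the last pivot survives.
  set v₁ : ℂ := -conj z / β
  set v : Fin 3 → ℂ := ![-(conj x * v₁ + conj y) / α, v₁, 1]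
  have hα' : (α : ℂ) ≠ 0 := Complex.ofReal_ne_zero.mpr hα
  have hβ' : (β : ℂ) ≠ 0 := Complex.ofReal_ne_zero.mpr hβ
  have hv : star v ⬝ᵥ cholProd α β s x y z *ᵥ v = s := by
    simp only [v, v₁, cholProd, dotProduct, mulVec, Fin.sum_univ_three, Pi.star_apply,
      RCLike.star_def, of_apply, cons_val, map_neg, map_div₀, map_add, map_mul,
      Complex.conj_ofReal, Complex.conj_conj, map_one]
    field_simp
    ring
  exact Complex.zero_le_real.mp (hv ▸ h.dotProduct_mulVec_nonneg v)

theorem eq_cholProd {a d f α β : ℝ} {b c e x y z : ℂ} (hα : α ^ 2 = a) (hx : α * x = conj b)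
    (hy : α * y = conj c) (hβ : β ^ 2 = d - ‖x‖ ^ 2) (hz : β * z = conj e - y * conj x) :
    !![(a : ℂ), b, c; conj b, d, e; conj c, conj e, f] =
      cholProd α β (f - ‖y‖ ^ 2 - ‖z‖ ^ 2) x y z := by
  have hx' : α * conj x = b := by simpa using congrArg conj hx
  have hy' : α * conj y = c := by simpa using congrArg conj hy
  have hz' : β * conj z = e - x * conj y := by simpa [mul_comm] using congrArg conj hz
  have hd : (d : ℂ) = x * conj x + (β : ℂ) ^ 2 := by
    rw [Complex.mul_conj']; exact_mod_cast (sub_eq_iff_eq_add'.mp hβ.symm)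
  subst hα
  ext i j
  fin_cases i <;> fin_cases j <;>
    simp [cholProd, hd, hx, hx', hy, hy', hz, hz', Complex.mul_conj']

theorem cholProd_excess_eq {a α β : ℝ} {b c e x y z : ℂ} (hα : α ^ 2 = a) (hα0 : α ≠ 0)
    (hx : α * x = conj b) (hy : α * y = conj c) (hz : β * z = conj e - y * conj x) :
    ‖x‖ * ‖y‖ + |β| * ‖z‖ - ‖x * conj y + β * conj z‖ =
      (‖(a : ℂ) * e - conj b * c‖ + ‖b‖ * ‖c‖ - a * ‖e‖) / a := by
  have ha : 0 < a := by rw [← hα]; positivity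
  have hxy : a * (‖x‖ * ‖y‖) = ‖b‖ * ‖c‖ := by
    rw [← Complex.norm_conj b, ← Complex.norm_conj c, ← hx, ← hy, ← hα]
    simp only [norm_mul, Complex.norm_real, Real.norm_eq_abs, ← sq_abs α]
    ring
  have hβz : a * (|β| * ‖z‖) = ‖(a : ℂ) * e - conj b * c‖ := by
    have : (a : ℂ) * (β * z) = conj ((a : ℂ) * e - conj b * c) := by
      have hx' : α * conj x = b := by simpa using congrArg conj hx
      simp only [hz, map_sub, map_mul, Complex.conj_ofReal, Complex.conj_conj, ← hx', ← hy, ← hα]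
      push_cast
      ring
    rw [← Complex.norm_conj ((a : ℂ) * e - conj b * c), ← this, norm_mul, norm_mul,
      Complex.norm_real, Complex.norm_real, Real.norm_of_nonneg ha.le, Real.norm_eq_abs]
  have he : x * conj y + β * conj z = e := by
    have := congrArg conj hz
    simp only [map_mul, map_sub, Complex.conj_ofReal, Complex.conj_conj] at this
    rw [this]; ring
  rw [he]
  field_simp
  linarith

theorem gammaPlus_cholProd_le :
    gammaPlus (cholProd α β (γ ^ 2) x y z) ≤ norm11 (cholProd α β (γ ^ 2) x y z) +
      2 * (‖x‖ * ‖y‖ + |β| * ‖z‖ - ‖x * conj y + β * conj z‖) := by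
  rw [← sum_sq_l1n_cholCol, ← sum_vecMulVec_cholCol]
  exact gammaPlus_sum_vecMulVec_le _

theorem norm11_le_gammaPlus_cholProd :
    norm11 (cholProd α β (γ ^ 2) x y z) ≤ gammaPlus (cholProd α β (γ ^ 2) x y z) := by
  rw [← sum_vecMulVec_cholCol]
  exact norm11_le_gammaPlus_sum_vecMulVec _

end Cholesky

theorem stmt19 (a d f : ℝ) (b c e : ℂ)
    (A : Matrix (Fin 3) (Fin 3) ℂ)
    (hAdef : A = !![(a : ℂ), b, c;
                    (starRingEnd ℂ) b, (d : ℂ), e;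
                    (starRingEnd ℂ) c, (starRingEnd ℂ) e, (f : ℂ)])
    (hA : A.PosSemidef) (ha : 0 < a) (had : 0 < a * d - ‖b‖ ^ 2) :
    gammaPlus A ≤ norm11 A +
      2 * (‖(a : ℂ) * e - (starRingEnd ℂ) b * c‖
            + ‖b‖ * ‖c‖ - a * ‖e‖) / a ∧
    (‖(a : ℂ) * e - (starRingEnd ℂ) b * c‖
        + ‖b‖ * ‖c‖ = a * ‖e‖ →
      gammaPlus A = norm11 A) := by
  obtain ⟨α, hα, hα0⟩ : ∃ α : ℝ, α ^ 2 = a ∧ α ≠ 0 :=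
    ⟨√a, Real.sq_sqrt ha.le, (Real.sqrt_pos.mpr ha).ne'⟩
  have hα' : (α : ℂ) ≠ 0 := Complex.ofReal_ne_zero.mpr hα0
  obtain ⟨x, hx⟩ : ∃ x, α * x = conj b := ⟨_, mul_div_cancel₀ _ hα'⟩
  obtain ⟨y, hy⟩ : ∃ y, α * y = conj c := ⟨_, mul_div_cancel₀ _ hα'⟩
  have hd : 0 < d - ‖x‖ ^ 2 := by
    have : a * ‖x‖ ^ 2 = ‖b‖ ^ 2 := by
      rw [← hα, ← Complex.norm_conj b, ← hx, norm_mul, Complex.norm_real, Real.norm_eq_abs,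
        mul_pow, sq_abs]
    nlinarith
  obtain ⟨β, hβ, hβ0⟩ : ∃ β : ℝ, β ^ 2 = d - ‖x‖ ^ 2 ∧ β ≠ 0 :=
    ⟨_, Real.sq_sqrt hd.le, (Real.sqrt_pos.mpr hd).ne'⟩
  obtain ⟨z, hz⟩ : ∃ z, β * z = conj e - y * conj x :=
    ⟨_, mul_div_cancel₀ _ (Complex.ofReal_ne_zero.mpr hβ0)⟩
  rw [eq_cholProd hα hx hy hβ hz] at hAdef
  have hs := nonneg_of_posSemidef_cholProd (hAdef ▸ hA) hα0 hβ0
  rw [← Real.sq_sqrt hs] at hAdef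
  subst hAdef
  have hub := gammaPlus_cholProd_le α β √(f - ‖y‖ ^ 2 - ‖z‖ ^ 2) x y z
  rw [cholProd_excess_eq hα hα0 hx hy hz, ← mul_div_assoc] at hub
  refine ⟨hub, fun h => le_antisymm ?_ (norm11_le_gammaPlus_cholProd _ _ _ _ _ _)⟩
  rwa [h, sub_self, mul_zero, zero_div, add_zero] at hub
end
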